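/- If F < F̄_min, then Q̄(x) < 0 for all x ∈ (0,1]; in particular the replicator dynamics ẋ = x(1−x)Q̄(x) of the bribery game has no interior equilibrium in (0,1), the gradient of selection x(1−x)Q̄(x) is negative on (0,1), and the population evolves toward full defection (x = 0 is the attracting boundary state). -/

import Mathlib

/-- The bribery-game gradient function Q̄. -/
noncomputable def Qbar (N : ℕ) (c τ β rp α F h γ p q : ℝ) (x : ℝ) : ℝ :=
  F * c / N - c - 2 * α * β * τ * rp + β * τ * rp
    + ((N : ℝ) - 1) / N * γ * h * (q - p)
    - α * β * τ * rp * (∑ k ∈ Finset.range (N - 1), (1 - x) ^ (k + 1))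
    + (1 - α) * β * τ * rp * (∑ k ∈ Finset.range (N - 1), x ^ (k + 1))

/-- The lower threshold F̄_min for the pool multiplier in the bribery game. -/
noncomputable def Fbarmin (N : ℕ) (c τ β rp α h γ p q : ℝ) : ℝ :=
  (N * c - ((N : ℝ) - 1) * γ * h * (q - p) - N * β * τ * rp * (1 - 2 * α)
    - N * ((N : ℝ) - 1) * (1 - α) * β * τ * rp) / c

/-- The upper threshold F̄_max for the pool multiplier in the bribery game. -/
noncomputable def Fbarmax (N : ℕ) (c τ β rp α h γ p q : ℝ) : ℝ :=
  (N * c - ((N : ℝ) - 1) * γ * h * (q - p) - N * β * τ * rp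
    + N * α * β * τ * rp * ((N : ℝ) + 1)) / c

theorem sum_range_pow_succ_le {x : ℝ} (hx₀ : 0 ≤ x) (hx₁ : x ≤ 1) (n : ℕ) :
    ∑ k ∈ Finset.range n, x ^ (k + 1) ≤ n := by
  simpa using Finset.sum_le_sum fun k (_ : k ∈ Finset.range n) => pow_le_one₀ hx₀ hx₁

/-- On `[0, 1]` the punishment of cooperators only lowers `Q̄`, and the punishment of
defectors raises it by at most its value `(N - 1)(1 - α)βτr_p` at `x = 1`; this worst case
is exactly what `F̄_min` balances. -/
theorem Qbar_le_of_mem_Icc {N : ℕ} (hN : 1 ≤ N) {c τ β rp α : ℝ} (hc : c ≠ 0)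
    (hβ : 0 ≤ β) (hτ : 0 ≤ τ) (hrp : 0 ≤ rp) (hα₀ : 0 ≤ α) (hα₁ : α ≤ 1) (F h γ p q : ℝ) {x : ℝ}
    (hx₀ : 0 ≤ x) (hx₁ : x ≤ 1) :
    Qbar N c τ β rp α F h γ p q x ≤ (F - Fbarmin N c τ β rp α h γ p q) * c / N := by
  have hN₀ : (N : ℝ) ≠ 0 := by positivity
  have hcast : ((N - 1 : ℕ) : ℝ) = N - 1 := by push_cast [hN]; ring
  have hα₁' : 0 ≤ 1 - α := sub_nonneg.2 hα₁
  have hx₁' : 0 ≤ 1 - x := sub_nonneg.2 hx₁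
  have hcoop : 0 ≤ α * β * τ * rp * ∑ k ∈ Finset.range (N - 1), (1 - x) ^ (k + 1) := by
    positivity
  have hdef : (1 - α) * β * τ * rp * ∑ k ∈ Finset.range (N - 1), x ^ (k + 1)
      ≤ (1 - α) * β * τ * rp * (N - 1) := by
    rw [← hcast]
    exact mul_le_mul_of_nonneg_left (sum_range_pow_succ_le hx₀ hx₁ _) (by positivity)
  have hworst : (F - Fbarmin N c τ β rp α h γ p q) * c / N
      = F * c / N - c - 2 * α * β * τ * rp + β * τ * rp
        + ((N : ℝ) - 1) / N * γ * h * (q - p) + (1 - α) * β * τ * rp * (N - 1) := by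
    unfold Fbarmin
    field_simp
    ring
  rw [hworst]
  unfold Qbar
  linarith

theorem bg_defection_dominance_general (N : ℕ) (hN : 2 ≤ N) (c τ β rp α F h γ p q : ℝ)
    (hc : 0 < c) (hτ : 0 < τ) (hβ : 0 < β) (hrp : 0 < rp) (hα0 : 0 ≤ α) (hα1 : α ≤ 1)
    (hF : F < Fbarmin N c τ β rp α h γ p q) :
    (∀ x : ℝ, 0 < x → x ≤ 1 → Qbar N c τ β rp α F h γ p q x < 0) ∧
    (∀ x : ℝ, 0 < x → x < 1 → x * (1 - x) * Qbar N c τ β rp α F h γ p q x < 0) ∧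
    ¬∃ x : ℝ, 0 < x ∧ x < 1 ∧ x * (1 - x) * Qbar N c τ β rp α F h γ p q x = 0 := by
  have hQ : ∀ x : ℝ, 0 < x → x ≤ 1 → Qbar N c τ β rp α F h γ p q x < 0 := by
    intro x hx₀ hx₁
    have hN₀ : (0 : ℝ) < N := by positivity
    calc Qbar N c τ β rp α F h γ p q x
        ≤ (F - Fbarmin N c τ β rp α h γ p q) * c / N :=
          Qbar_le_of_mem_Icc (by omega) hc.ne' hβ.le hτ.le hrp.le hα0 hα1 F h γ p q hx₀.le hx₁
      _ < 0 := div_neg_of_neg_of_pos (mul_neg_of_neg_of_pos (sub_neg.2 hF) hc) hN₀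
  have hgrad : ∀ x : ℝ, 0 < x → x < 1 → x * (1 - x) * Qbar N c τ β rp α F h γ p q x < 0 :=
    fun x hx₀ hx₁ => mul_neg_of_pos_of_neg (mul_pos hx₀ (sub_pos.2 hx₁)) (hQ x hx₀ hx₁.le)
  exact ⟨hQ, hgrad, fun ⟨x, hx₀, hx₁, hx⟩ => (hgrad x hx₀ hx₁).ne hx⟩

/-- If F < F̄_min then Q̄(x) < 0 on (0,1], the gradient of selection x(1−x)Q̄(x) is
negative on (0,1), and the replicator dynamics of the bribery game has no interior
equilibrium: the population evolves toward full defection. -/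
theorem bg_defection_dominance (N : ℕ) (hN : 2 ≤ N) (c τ β rp α F h γ p q : ℝ)
    (hc : 0 < c) (hτ : 0 < τ) (hβ : 0 < β) (hrp : 0 < rp) (hα0 : 0 ≤ α) (hα1 : α ≤ 1)
    (hh : 0 < h) (hγ0 : 0 < γ) (hγ1 : γ ≤ 1) (hp0 : 0 ≤ p) (hp1 : p ≤ 1)
    (hq0 : 0 ≤ q) (hq1 : q ≤ 1)
    (hF : F < Fbarmin N c τ β rp α h γ p q) :
    (∀ x : ℝ, 0 < x → x ≤ 1 → Qbar N c τ β rp α F h γ p q x < 0) ∧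
    (∀ x : ℝ, 0 < x → x < 1 → x * (1 - x) * Qbar N c τ β rp α F h γ p q x < 0) ∧
    ¬∃ x : ℝ, 0 < x ∧ x < 1 ∧ x * (1 - x) * Qbar N c τ β rp α F h γ p q x = 0 :=
  bg_defection_dominance_general N hN c τ β rp α F h γ p q hc hτ hβ hrp hα0 hα1 hF
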